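/- Let ε ∈ (0,1/4], k ≥ 1, let 𝒲 be a family of channels from [2k] to finite alphabets, and consider a deterministic sequentially interactive protocol over n users using 𝒲. Let Z be uniform on {−1,+1}^k and, conditionally on Z, let the inputs be i.i.d. with law p_Z, producing transcript Y^n. Then for every 1 ≤ t ≤ n and every i ∈ {1,…,k}, I(Z_i; Y^t) ≤ (8ε²/k) · Σ_{s=1}^{t} E[ H(W^{Y^{s−1}})_{i,i} ], where the expectation is over the transcript prefix Y^{s−1} and mutual information is measured in nats. -/

import Mathlib

open Finset

namespace Paper

/-- A probability distribution on a finite type, given by its mass function. -/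
def IsDist {α : Type*} [Fintype α] (p : α → ℝ) : Prop :=
  (∀ a, 0 ≤ p a) ∧ ∑ a, p a = 1

/-- A channel (row-stochastic kernel) from `α` to the finite alphabet `𝒴`. -/
def IsChannel {α 𝒴 : Type*} [Fintype α] [Fintype 𝒴] (W : α → 𝒴 → ℝ) : Prop :=
  ∀ x, IsDist (W x)

/-- Total variation distance between mass functions on a finite type. -/
noncomputable def tvDist {α : Type*} [Fintype α] (p q : α → ℝ) : ℝ :=
  (∑ a, |p a - q a|) / 2

/-- The element `2i-1` (1-indexed) of `[2k]`, i.e. index `2i` in 0-indexed terms. -/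
def lo {k : ℕ} (i : Fin k) : Fin (2 * k) := ⟨2 * i.val, by have := i.isLt; omega⟩

/-- The element `2i` (1-indexed) of `[2k]`, i.e. index `2i+1` in 0-indexed terms. -/
def hi {k : ℕ} (i : Fin k) : Fin (2 * k) := ⟨2 * i.val + 1, by have := i.isLt; omega⟩

/-- The channel information matrix `H(W)`  (division by `0` yields `0` in Lean,
matching the convention that terms with zero denominator vanish). -/
noncomputable def HMat (k : ℕ) {𝒴 : Type*} [Fintype 𝒴] (W : Fin (2 * k) → 𝒴 → ℝ) :
    Matrix (Fin k) (Fin k) ℝ := fun i j =>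
  ∑ y, (W (lo i) y - W (hi i) y) * (W (lo j) y - W (hi j) y) / (∑ x, W x y)

/-- Nuclear norm of a real symmetric matrix (sum of absolute values of eigenvalues). -/
noncomputable def nucNorm {k : ℕ} (A : Matrix (Fin k) (Fin k) ℝ) : ℝ :=
  if h : A.IsHermitian then ∑ i, |h.eigenvalues i| else 0

/-- Operator (spectral) norm of a real symmetric matrix. -/
noncomputable def opNorm {k : ℕ} (A : Matrix (Fin k) (Fin k) ℝ) : ℝ :=
  if h : A.IsHermitian then ⨆ i, |h.eigenvalues i| else 0

/-- Frobenius norm of a matrix. -/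
noncomputable def frobNorm {k : ℕ} (A : Matrix (Fin k) (Fin k) ℝ) : ℝ :=
  Real.sqrt (∑ i, ∑ j, (A i j) ^ 2)

/-- `‖𝒲‖_*`, the maximal nuclear norm of `H(W)` over the family. -/
noncomputable def famNuc (k : ℕ) {𝒴 : Type*} [Fintype 𝒴]
    (𝒲 : Set (Fin (2 * k) → 𝒴 → ℝ)) : ℝ :=
  sSup ((fun W => nucNorm (HMat k W)) '' 𝒲)

/-- `‖𝒲‖_op`, the maximal operator norm of `H(W)` over the family. -/
noncomputable def famOp (k : ℕ) {𝒴 : Type*} [Fintype 𝒴]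
    (𝒲 : Set (Fin (2 * k) → 𝒴 → ℝ)) : ℝ :=
  sSup ((fun W => opNorm (HMat k W)) '' 𝒲)

/-- `‖𝒲‖_F`, the maximal Frobenius norm of `H(W)` over the family. -/
noncomputable def famFrob (k : ℕ) {𝒴 : Type*} [Fintype 𝒴]
    (𝒲 : Set (Fin (2 * k) → 𝒴 → ℝ)) : ℝ :=
  sSup ((fun W => frobNorm (HMat k W)) '' 𝒲)

/-- A deterministic sequentially interactive protocol over `n` users: to each user `t`
and each message prefix it assigns a channel. -/
def Protocol (k n : ℕ) (𝒴 : Type*) : Type _ :=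
  (t : Fin n) → (Fin t.val → 𝒴) → Fin (2 * k) → 𝒴 → ℝ

/-- All channels used by the protocol belong to the family `𝒲`. -/
def UsesFamily {k n : ℕ} {𝒴 : Type*} (π : Protocol k n 𝒴)
    (𝒲 : Set (Fin (2 * k) → 𝒴 → ℝ)) : Prop :=
  ∀ t pre, π t pre ∈ 𝒲

/-- All kernels used by the protocol are genuine channels. -/
def ChannelProtocol {k n : ℕ} {𝒴 : Type*} [Fintype 𝒴] (π : Protocol k n 𝒴) : Prop :=
  ∀ t pre, IsChannel (π t pre)

/-- Distribution of the first `t` messages of the transcript when the inputs are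
i.i.d. with law `p`. -/
noncomputable def prefixDist {k n : ℕ} {𝒴 : Type*} [Fintype 𝒴] (π : Protocol k n 𝒴)
    (p : Fin (2 * k) → ℝ) (t : ℕ) (ht : t ≤ n) (y : Fin t → 𝒴) : ℝ :=
  ∏ s : Fin t, ∑ x, p x *
    π ⟨s.val, lt_of_lt_of_le s.isLt ht⟩ (fun r => y ⟨r.val, lt_trans r.isLt s.isLt⟩) x (y s)

/-- Distribution of the full transcript `Y^n` when the inputs are i.i.d. with law `p`. -/
noncomputable def transDist {k n : ℕ} {𝒴 : Type*} [Fintype 𝒴] (π : Protocol k n 𝒴)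
    (p : Fin (2 * k) → ℝ) (y : Fin n → 𝒴) : ℝ :=
  prefixDist π p n le_rfl y

/-- The uniform distribution on `[2k]`. -/
noncomputable def uniform2k (k : ℕ) : Fin (2 * k) → ℝ := fun _ => (2 * (k : ℝ))⁻¹

/-- An `(n, ε)`-estimator using `𝒲`: a public-coin sequentially interactive protocol
(seed distribution `μ`, protocols `π u`, channels from `𝒲`) together with an estimator
`est` such that, for every input distribution `p`, the probability that the estimate is
more than `ε` away from `p` in total variation is at most `1/100`. -/
def IsEstimator {k n : ℕ} {𝒴 𝒰 : Type*} [Fintype 𝒴] [Fintype 𝒰]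
    (𝒲 : Set (Fin (2 * k) → 𝒴 → ℝ)) (μ : 𝒰 → ℝ) (π : 𝒰 → Protocol k n 𝒴)
    (est : (Fin n → 𝒴) → 𝒰 → Fin (2 * k) → ℝ) (ε : ℝ) : Prop :=
  IsDist μ ∧ (∀ u, UsesFamily (π u) 𝒲) ∧ (∀ u, ChannelProtocol (π u)) ∧
  (∀ y u, IsDist (est y u)) ∧
  ∀ p : Fin (2 * k) → ℝ, IsDist p →
    (∑ u, ∑ y : Fin n → 𝒴, μ u * (transDist (π u) p y *
      (if ε < tvDist (est y u) p then (1 : ℝ) else 0))) ≤ 1 / 100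

/-- An `(n, ε)`-uniformity test using `𝒲`: a public-coin sequentially interactive
protocol together with a randomized decision rule `T` (probability of output `1`)
accepting uniform and rejecting `ε`-far distributions with probability `99/100`. -/
def IsUnifTest {k n : ℕ} {𝒴 𝒰 : Type*} [Fintype 𝒴] [Fintype 𝒰]
    (𝒲 : Set (Fin (2 * k) → 𝒴 → ℝ)) (μ : 𝒰 → ℝ) (π : 𝒰 → Protocol k n 𝒴)
    (T : (Fin n → 𝒴) → 𝒰 → ℝ) (ε : ℝ) : Prop :=
  IsDist μ ∧ (∀ u, UsesFamily (π u) 𝒲) ∧ (∀ u, ChannelProtocol (π u)) ∧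
  (∀ y u, T y u ∈ Set.Icc (0 : ℝ) 1) ∧
  (99 / 100 ≤ ∑ u, ∑ y : Fin n → 𝒴, μ u * (transDist (π u) (uniform2k k) y * (1 - T y u))) ∧
  ∀ p : Fin (2 * k) → ℝ, IsDist p → ε ≤ tvDist p (uniform2k k) →
    99 / 100 ≤ ∑ u, ∑ y : Fin n → 𝒴, μ u * (transDist (π u) p y * T y u)

/-- Mutual information (in nats) of a joint mass function on `A × B`. -/
noncomputable def miNats {A B : Type*} [Fintype A] [Fintype B] (j : A → B → ℝ) : ℝ :=
  ∑ a, ∑ b, j a b * Real.log (j a b / ((∑ b', j a b') * (∑ a', j a' b)))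

/-- Mutual information (in bits) of a joint mass function on `A × B`. -/
noncomputable def miBits {A B : Type*} [Fintype A] [Fintype B] (j : A → B → ℝ) : ℝ :=
  ∑ a, ∑ b, j a b * Real.logb 2 (j a b / ((∑ b', j a b') * (∑ a', j a' b)))

/-- Binary entropy function (in bits). -/
noncomputable def binEnt (t : ℝ) : ℝ :=
  -(t * Real.logb 2 t) - (1 - t) * Real.logb 2 (1 - t)

/-- `±1` encoding of a Boolean. -/
def pm (b : Bool) : ℝ := if b then 1 else -1

/-- The joint mass function of `(Z_i, Y)` obtained from a joint mass function of `(Z, Y)`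
for `Z ∈ {−1,+1}^k` (encoded via Booleans). -/
noncomputable def coordJoint {k : ℕ} {𝒴 : Type*} [Fintype 𝒴]
    (j : (Fin k → Bool) → 𝒴 → ℝ) (i : Fin k) : Bool → 𝒴 → ℝ :=
  fun b y => ∑ z : Fin k → Bool, if z i = b then j z y else 0

/-- The Paninski perturbation `p_z` of the uniform distribution on `[2k]`:
`p_z(2i−1) = (1+2ε z_i)/(2k)` and `p_z(2i) = (1−2ε z_i)/(2k)` (1-indexed). -/
noncomputable def paninski (k : ℕ) (ε : ℝ) (z : Fin k → Bool) : Fin (2 * k) → ℝ :=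
  fun x => (1 + (if x.val % 2 = 0 then (1 : ℝ) else -1) * (2 * ε) *
    pm (z ⟨x.val / 2, by have := x.isLt; omega⟩)) / (2 * k)

/-- Chi-square divergence between mass functions on a finite type. -/
noncomputable def chiSq {α : Type*} [Fintype α] (P Q : α → ℝ) : ℝ :=
  ∑ y, (P y - Q y) ^ 2 / Q y

/-- Kullback–Leibler divergence (in nats) between mass functions on a finite type. -/
noncomputable def klDivNats {α : Type*} [Fintype α] (P Q : α → ℝ) : ℝ :=
  ∑ y, P y * Real.log (P y / Q y)

/-- The leaky-query channel `W_u^η` on output alphabet `[2k] ∪ {1*, 0*}`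
(`Sum.inr true = 1*`, `Sum.inr false = 0*`). -/
noncomputable def leaky (k : ℕ) (η : ℝ) (u : Fin (2 * k) → ℝ) :
    Fin (2 * k) → (Fin (2 * k) ⊕ Bool) → ℝ :=
  fun x y => Sum.elim (fun x' => if x' = x then η else 0)
    (fun b => if b then (1 - η) * u x else (1 - η) * (1 - u x)) y

/-- The vector `δ(u)` associated with a leaky-query channel. -/
noncomputable def leakyDelta (k : ℕ) (u : Fin (2 * k) → ℝ) : Fin k → ℝ :=
  fun i => (u (lo i) - u (hi i)) *
    Real.sqrt ((2 * (k : ℝ)) / ((∑ x, u x) * (2 * (k : ℝ) - ∑ x, u x)))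

/-- The partial-erasure channel `W_{x*}` on output alphabet `[2k] ∪ {⊥}`. -/
noncomputable def eraseCh (k : ℕ) (η : ℝ) (xs : Fin (2 * k)) :
    Fin (2 * k) → (Fin (2 * k) ⊕ Unit) → ℝ :=
  fun x y => Sum.elim (fun x' => if x' = x then (if x = xs then 1 else η) else 0)
    (fun _ => if x = xs then 0 else 1 - η) y

/-- The family of all `ρ`-locally differentially private channels from `[2k]` to `𝒴`. -/
def ldpFamily (k : ℕ) {𝒴 : Type*} [Fintype 𝒴] (ρ : ℝ) :
    Set (Fin (2 * k) → 𝒴 → ℝ) :=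
  { W | IsChannel W ∧ ∀ x x' y, W x y ≤ Real.exp ρ * W x' y }
/-!
Since `Z_i` is a uniform bit, `I(Z_i; Y^t)` is at most the triangular discrimination between
the laws of `Y^t` given `Z_i = +1` and given `Z_i = -1`. Pairing each `z` with `z_i = +1` with
the point `z'` that differs from it only at `i`, joint convexity bounds this by the average over
the pairs of the triangular discrimination between `P_z` and `P_{z'}`, which is at most twice
their squared Hellinger distance. Along the protocol the squared Hellinger distance obeys a chain
rule: it is the sum over rounds of the per-round squared Hellinger distances weighted by
`√(P_z P_{z'}) ≤ (P_z + P_{z'}) / 2`. In a round with channel `W`, `p_z - p_{z'}` is `±2ε/k` on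
`{2i-1, 2i}` and `0` elsewhere, while `p_z + p_{z'} ≥ 1/(2k)` everywhere because `ε ≤ 1/4`, so the
per-round term is at most `(8ε²/k) H(W)_{ii}`.
-/

open Real (log log_le_sub_one_of_pos sq_sqrt sqrt_mul sqrt_nonneg)

noncomputable def triangularDiscrimination {α : Type*} [Fintype α] (P Q : α → ℝ) : ℝ :=
  ∑ a, (P a - Q a) ^ 2 / (P a + Q a)

/-- Without the usual factor `1/2`. -/
noncomputable def sqHellinger {α : Type*} [Fintype α] (P Q : α → ℝ) : ℝ :=
  ∑ a, (√(P a) - √(Q a)) ^ 2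

noncomputable def outputDist {α 𝒴 : Type*} [Fintype α] (p : α → ℝ) (W : α → 𝒴 → ℝ) :
    𝒴 → ℝ :=
  fun y => ∑ x, p x * W x y

section Inequalities

theorem mul_log_div_le_mul_div_sub_one {x m : ℝ} (hx : 0 ≤ x) (hm : 0 < m) :
    x * log (x / m) ≤ x * (x / m - 1) := by
  rcases hx.eq_or_lt with rfl | hx
  · simp
  · exact mul_le_mul_of_nonneg_left (log_le_sub_one_of_pos (div_pos hx hm)) hx.le

theorem mul_log_div_midpoint_add_le {p q : ℝ} (hp : 0 ≤ p) (hq : 0 ≤ q) :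
    p * log (p / (1 / 2 * (p + q))) + q * log (q / (1 / 2 * (p + q))) ≤
      (p - q) ^ 2 / (p + q) := by
  rcases (add_nonneg hp hq).eq_or_lt with h | h
  · obtain ⟨rfl, rfl⟩ : p = 0 ∧ q = 0 := ⟨by linarith, by linarith⟩
    simp
  · have hm : 0 < 1 / 2 * (p + q) := by positivity
    have key : p * (p / (1 / 2 * (p + q)) - 1) + q * (q / (1 / 2 * (p + q)) - 1) =
        (p - q) ^ 2 / (p + q) := by
      field_simp
      ring
    linarith [mul_log_div_le_mul_div_sub_one hp hm, mul_log_div_le_mul_div_sub_one hq hm]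

theorem sq_sum_div_le_sum_sq_div_of_nonneg {ι : Type*} (s : Finset ι) (f g : ι → ℝ)
    (hg : ∀ i ∈ s, 0 ≤ g i) (hfg : ∀ i ∈ s, g i = 0 → f i = 0) :
    (∑ i ∈ s, f i) ^ 2 / ∑ i ∈ s, g i ≤ ∑ i ∈ s, f i ^ 2 / g i := by
  have H : ∀ i ∈ s, 0 ≤ f i ^ 2 / g i := fun i hi ↦ div_nonneg (sq_nonneg _) (hg i hi)
  refine div_le_of_le_mul₀ (sum_nonneg hg) (sum_nonneg H)
    (sum_sq_le_sum_mul_sum_of_sq_le_mul _ H hg fun i hi ↦ ?_)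
  rcases (hg i hi).eq_or_lt with h | h
  · simp [hfg i hi h.symm]
  · rw [div_mul_cancel₀ _ h.ne']

theorem sqrt_mul_sqrt_le_add_div_two {a b : ℝ} (ha : 0 ≤ a) (hb : 0 ≤ b) :
    √a * √b ≤ (a + b) / 2 := by
  have := two_mul_le_add_sq √a √b
  rw [sq_sqrt ha, sq_sqrt hb] at this
  linarith

theorem sq_sqrt_sub_sqrt {a b : ℝ} (ha : 0 ≤ a) (hb : 0 ≤ b) :
    (√a - √b) ^ 2 = a + b - 2 * (√a * √b) := by
  rw [sub_sq, sq_sqrt ha, sq_sqrt hb]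
  ring

theorem sq_sqrt_sub_le_sq_sub_div_add {p q : ℝ} (hp : 0 ≤ p) (hq : 0 ≤ q) :
    (√p - √q) ^ 2 ≤ (p - q) ^ 2 / (p + q) := by
  rcases (add_nonneg hp hq).eq_or_lt with h | h
  · obtain ⟨rfl, rfl⟩ : p = 0 ∧ q = 0 := ⟨by linarith, by linarith⟩
    simp
  · rw [le_div_iff₀ h]
    nlinarith [sq_sqrt hp, sq_sqrt hq, sqrt_nonneg p, sqrt_nonneg q,
      mul_nonneg (sqrt_nonneg p) (sqrt_nonneg q), sq_nonneg (√p - √q)]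

theorem sq_sub_div_add_le_two_mul_sq_sqrt_sub {p q : ℝ} (hp : 0 ≤ p) (hq : 0 ≤ q) :
    (p - q) ^ 2 / (p + q) ≤ 2 * (√p - √q) ^ 2 := by
  rcases (add_nonneg hp hq).eq_or_lt with h | h
  · obtain ⟨rfl, rfl⟩ : p = 0 ∧ q = 0 := ⟨by linarith, by linarith⟩
    simp
  · rw [div_le_iff₀ h]
    nlinarith [sq_sqrt hp, sq_sqrt hq, sqrt_nonneg p, sqrt_nonneg q,
      sq_nonneg (√p - √q), sq_nonneg (√p + √q), mul_nonneg (sqrt_nonneg p) (sqrt_nonneg q)]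

end Inequalities

section Divergences
variable {α : Type*} [Fintype α]

theorem miNats_le_triangularDiscrimination (j : Bool → α → ℝ) (hj : ∀ b a, 0 ≤ j b a)
    (hmarg : ∀ b, ∑ a, j b a = 1 / 2) :
    miNats j ≤ triangularDiscrimination (j true) (j false) := by
  simp only [miNats, hmarg, Fintype.sum_bool, ← sum_add_distrib]
  exact sum_le_sum fun a _ ↦ mul_log_div_midpoint_add_le (hj true a) (hj false a)

theorem triangularDiscrimination_sum_le {ι : Type*} (s : Finset ι) (P Q : ι → α → ℝ)
    (hP : ∀ m ∈ s, ∀ a, 0 ≤ P m a) (hQ : ∀ m ∈ s, ∀ a, 0 ≤ Q m a) :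
    triangularDiscrimination (fun a ↦ ∑ m ∈ s, P m a) (fun a ↦ ∑ m ∈ s, Q m a) ≤
      ∑ m ∈ s, triangularDiscrimination (P m) (Q m) := by
  simp only [triangularDiscrimination]
  rw [sum_comm]
  refine sum_le_sum fun a _ ↦ ?_
  rw [← sum_sub_distrib, ← sum_add_distrib]
  refine sq_sum_div_le_sum_sq_div_of_nonneg s _ _
    (fun m hm ↦ add_nonneg (hP m hm a) (hQ m hm a)) fun m hm h ↦ ?_
  linarith [hP m hm a, hQ m hm a]

theorem triangularDiscrimination_const_mul (c : ℝ) (P Q : α → ℝ) :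
    triangularDiscrimination (fun a ↦ c * P a) (fun a ↦ c * Q a) =
      c * triangularDiscrimination P Q := by
  rw [triangularDiscrimination, triangularDiscrimination, mul_sum]
  refine sum_congr rfl fun a _ ↦ ?_
  rcases eq_or_ne c 0 with rfl | hc
  · simp
  · rw [← mul_sub, ← mul_add, mul_pow, sq c, mul_assoc, mul_div_mul_left _ _ hc, mul_div_assoc]

theorem triangularDiscrimination_le_two_mul_sqHellinger {P Q : α → ℝ} (hP : ∀ a, 0 ≤ P a)
    (hQ : ∀ a, 0 ≤ Q a) :
    triangularDiscrimination P Q ≤ 2 * sqHellinger P Q := by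
  rw [sqHellinger, mul_sum]
  exact sum_le_sum fun a _ ↦ sq_sub_div_add_le_two_mul_sq_sqrt_sub (hP a) (hQ a)

theorem sqHellinger_nonneg (P Q : α → ℝ) : 0 ≤ sqHellinger P Q :=
  sum_nonneg fun _ _ ↦ sq_nonneg _

theorem sqHellinger_const_mul {A B : ℝ} (hA : 0 ≤ A) (hB : 0 ≤ B) {c d : α → ℝ}
    (hc : IsDist c) (hd : IsDist d) :
    sqHellinger (fun a ↦ A * c a) (fun a ↦ B * d a) =
      (√A - √B) ^ 2 + √A * √B * sqHellinger c d := by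
  have hAc : ∀ a, (√(A * c a) - √(B * d a)) ^ 2 =
      A * c a + B * d a - 2 * (√A * √B) * (√(c a) * √(d a)) := fun a ↦ by
    rw [sq_sqrt_sub_sqrt (mul_nonneg hA (hc.1 a)) (mul_nonneg hB (hd.1 a)),
      sqrt_mul hA, sqrt_mul hB]
    ring
  have hcd : ∀ a, (√(c a) - √(d a)) ^ 2 = c a + d a - 2 * (√(c a) * √(d a)) := fun a ↦
    sq_sqrt_sub_sqrt (hc.1 a) (hd.1 a)
  simp only [sqHellinger, hAc, hcd, sum_sub_distrib, sum_add_distrib, ← mul_sum, hc.2, hd.2,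
    sq_sqrt_sub_sqrt hA hB]
  ring

theorem isDist_outputDist {𝒴 : Type*} [Fintype 𝒴] {p : α → ℝ} {W : α → 𝒴 → ℝ}
    (hp : IsDist p) (hW : IsChannel W) : IsDist (outputDist p W) := by
  refine ⟨fun y ↦ sum_nonneg fun x _ ↦ mul_nonneg (hp.1 x) ((hW x).1 y), ?_⟩
  simp only [outputDist]
  rw [sum_comm]
  simp [← mul_sum, (hW _).2, hp.2]

end Divergences

section SplitAt
variable {ι : Type*} [DecidableEq ι] (i : ι)

theorem funSplitAt_symm_apply_self (b : Bool) (w : {j // j ≠ i} → Bool) :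
    (Equiv.funSplitAt i Bool).symm (b, w) i = b := by
  simp [Equiv.funSplitAt, Equiv.piSplitAt]

theorem funSplitAt_symm_apply_of_ne (b b' : Bool) (w : {j // j ≠ i} → Bool) {j : ι}
    (hj : j ≠ i) :
    (Equiv.funSplitAt i Bool).symm (b, w) j = (Equiv.funSplitAt i Bool).symm (b', w) j := by
  simp [Equiv.funSplitAt, Equiv.piSplitAt, hj]

theorem sum_funSplitAt_symm [Fintype ι] {M : Type*} [AddCommMonoid M] (g : (ι → Bool) → M) :
    ∑ w, (g ((Equiv.funSplitAt i Bool).symm (true, w)) +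
      g ((Equiv.funSplitAt i Bool).symm (false, w))) = ∑ z, g z := by
  rw [← (Equiv.funSplitAt i Bool).symm.sum_comp, Fintype.sum_prod_type, Fintype.sum_bool,
    sum_add_distrib]

theorem card_funSplitAt [Fintype ι] :
    2 * Fintype.card ({j // j ≠ i} → Bool) = 2 ^ Fintype.card ι := by
  simpa using (Fintype.card_congr (Equiv.funSplitAt i Bool)).symm

end SplitAt

theorem coordJoint_apply {k : ℕ} {B : Type*} [Fintype B] (j : (Fin k → Bool) → B → ℝ)
    (i : Fin k) (b : Bool) (y : B) :
    coordJoint j i b y = ∑ w, j ((Equiv.funSplitAt i Bool).symm (b, w)) y := by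
  rw [coordJoint, ← (Equiv.funSplitAt i Bool).symm.sum_comp, Fintype.sum_prod_type]
  simp

theorem miNats_coordJoint_le {k : ℕ} {B : Type*} [Fintype B] (P : (Fin k → Bool) → B → ℝ)
    (hP : ∀ z, IsDist (P z)) (i : Fin k) :
    miNats (coordJoint (fun z y ↦ (1 / 2 ^ k : ℝ) * P z y) i) ≤
      1 / 2 ^ k * ∑ w, triangularDiscrimination (P ((Equiv.funSplitAt i Bool).symm (true, w)))
        (P ((Equiv.funSplitAt i Bool).symm (false, w))) := by
  set φ := (Equiv.funSplitAt i Bool).symm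
  set J := coordJoint (fun z y ↦ (1 / 2 ^ k : ℝ) * P z y) i
  have hJ b : J b = fun y ↦ ∑ w, 1 / 2 ^ k * P (φ (b, w)) y := funext (coordJoint_apply _ i b)
  have hcard : (Fintype.card ({j // j ≠ i} → Bool) : ℝ) = 2 ^ k / 2 := by
    have := card_funSplitAt i
    rw [Fintype.card_fin] at this
    rw [eq_div_iff two_ne_zero, mul_comm]
    exact_mod_cast this
  have hmarg b : ∑ y, J b y = 1 / 2 := by
    rw [hJ, sum_comm]
    simp only [← mul_sum, (hP _).2, mul_one, sum_const, card_univ, nsmul_eq_mul, hcard]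
    field_simp
  have hterm b w y : 0 ≤ 1 / 2 ^ k * P (φ (b, w)) y := mul_nonneg (by positivity) ((hP _).1 y)
  have hJ0 b y : 0 ≤ J b y := by
    rw [hJ]
    exact sum_nonneg fun w _ ↦ hterm b w y
  calc miNats J ≤ triangularDiscrimination (J true) (J false) :=
        miNats_le_triangularDiscrimination J hJ0 hmarg
    _ ≤ ∑ w, triangularDiscrimination (fun y ↦ 1 / 2 ^ k * P (φ (true, w)) y)
          (fun y ↦ 1 / 2 ^ k * P (φ (false, w)) y) := by
      rw [hJ, hJ]
      exact triangularDiscrimination_sum_le _ _ _ (fun w _ ↦ hterm true w) fun w _ ↦ hterm false w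
    _ = _ := by simp only [triangularDiscrimination_const_mul, ← mul_sum]

section Paninski
variable {k : ℕ}

theorem sum_eq_sum_lo_add_hi {M : Type*} [AddCommMonoid M] (f : Fin (2 * k) → M) :
    ∑ x, f x = ∑ j : Fin k, (f (lo j) + f (hi j)) := by
  rw [← (finProdFinEquiv.trans (finCongr (mul_comm k 2))).sum_comp, Fintype.sum_prod_type]
  refine sum_congr rfl fun j _ ↦ ?_
  rw [Fin.sum_univ_two]
  congr 2 <;> ext <;> simp [lo, hi, finProdFinEquiv]; ring

theorem paninski_lo (ε : ℝ) (z : Fin k → Bool) (j : Fin k) :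
    paninski k ε z (lo j) = (1 + 2 * ε * pm (z j)) / (2 * k) := by
  have : (⟨2 * j.val / 2, by omega⟩ : Fin k) = j := Fin.ext (by simp)
  simp only [paninski, lo, Nat.mul_mod_right, if_true, this]
  ring

theorem paninski_hi (ε : ℝ) (z : Fin k → Bool) (j : Fin k) :
    paninski k ε z (hi j) = (1 - 2 * ε * pm (z j)) / (2 * k) := by
  have : (⟨(2 * j.val + 1) / 2, by omega⟩ : Fin k) = j := Fin.ext (by simp; omega)
  simp only [paninski, hi, this, show (2 * j.val + 1) % 2 ≠ 0 by omega, if_false]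
  ring

theorem paninski_ge {ε : ℝ} (hε : 0 ≤ ε) (z : Fin k → Bool) (x : Fin (2 * k)) :
    (1 - 2 * ε) / (2 * k) ≤ paninski k ε z x := by
  unfold paninski pm
  gcongr
  split_ifs <;> linarith

theorem isDist_paninski (hk : k ≠ 0) {ε : ℝ} (hε : 0 ≤ ε) (hε' : ε ≤ 1 / 2)
    (z : Fin k → Bool) : IsDist (paninski k ε z) := by
  have h2ε : 0 ≤ 1 - 2 * ε := by linarith
  refine ⟨fun x ↦ (div_nonneg h2ε (by positivity)).trans (paninski_ge hε z x), ?_⟩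
  have hpair : ∀ j, paninski k ε z (lo j) + paninski k ε z (hi j) = (k : ℝ)⁻¹ := fun j ↦ by
    rw [paninski_lo, paninski_hi]
    field_simp
    ring
  simp [sum_eq_sum_lo_add_hi, hpair, hk]

theorem sum_paninski_sub_mul {ε : ℝ} {z z' : Fin k → Bool} {i : Fin k} (hz : z i = true)
    (hz' : z' i = false) (hzz' : ∀ j ≠ i, z j = z' j) (f : Fin (2 * k) → ℝ) :
    ∑ x, (paninski k ε z x - paninski k ε z' x) * f x = 2 * ε / k * (f (lo i) - f (hi i)) := by
  rw [sum_eq_sum_lo_add_hi, sum_eq_single i]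
  · simp only [paninski_lo, paninski_hi, hz, hz', pm, if_true, Bool.false_eq_true, if_false]
    field_simp
    ring
  · intro j _ hj
    simp only [paninski_lo, paninski_hi, hzz' j hj]
    ring
  · simp

theorem sqHellinger_outputDist_paninski_le {𝒴 : Type*} [Fintype 𝒴] {ε : ℝ}
    (hε : 0 ≤ ε) (hε' : ε ≤ 1 / 4) {z z' : Fin k → Bool} {i : Fin k} (hz : z i = true)
    (hz' : z' i = false) (hzz' : ∀ j ≠ i, z j = z' j) {W : Fin (2 * k) → 𝒴 → ℝ}
    (hW : ∀ x y, 0 ≤ W x y) :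
    sqHellinger (outputDist (paninski k ε z) W) (outputDist (paninski k ε z') W) ≤
      8 * ε ^ 2 / k * HMat k W i i := by
  have hk : (0 : ℝ) < k := by exact_mod_cast i.pos
  have hP := isDist_paninski i.pos.ne' hε (by linarith)
  rw [HMat, mul_sum]
  refine sum_le_sum fun y _ ↦ ?_
  set c := outputDist (paninski k ε z) W y
  set d := outputDist (paninski k ε z') W y
  set S := ∑ x, W x y
  have hc : 0 ≤ c := sum_nonneg fun x _ ↦ mul_nonneg ((hP z).1 x) (hW x y)
  have hd : 0 ≤ d := sum_nonneg fun x _ ↦ mul_nonneg ((hP z').1 x) (hW x y)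
  have hsub : c - d = 2 * ε / k * (W (lo i) y - W (hi i) y) := by
    rw [← sum_paninski_sub_mul hz hz' hzz' (W · y)]
    simp only [c, d, outputDist, ← sum_sub_distrib, sub_mul]
  have hadd : S / (2 * k) ≤ c + d := by
    simp only [c, d, S, outputDist, ← sum_add_distrib, sum_div]
    refine sum_le_sum fun x _ ↦ ?_
    have := add_le_add (paninski_ge hε z x) (paninski_ge hε z' x)
    rw [← add_mul, div_eq_mul_inv, mul_comm]
    refine mul_le_mul_of_nonneg_right (le_trans ?_ this) (hW x y)
    field_simp
    linarith
  rcases (sum_nonneg fun x _ ↦ hW x y : 0 ≤ S).eq_or_lt with hS | hS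
  · have hW0 : ∀ x, W x y = 0 := fun x ↦
      (sum_eq_zero_iff_of_nonneg fun x _ ↦ hW x y).1 hS.symm x (mem_univ x)
    have hcd : c = d := sub_eq_zero.1 (by rw [hsub, hW0, hW0, sub_self, mul_zero])
    simp [hcd, hW0]
  · calc (√c - √d) ^ 2 ≤ (c - d) ^ 2 / (c + d) := sq_sqrt_sub_le_sq_sub_div_add hc hd
      _ ≤ (c - d) ^ 2 / (S / (2 * k)) :=
        div_le_div_of_nonneg_left (sq_nonneg _) (by positivity) hadd
      _ = _ := by
        rw [hsub]
        field_simp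
        ring

end Paninski

section Protocol
variable {k n : ℕ} {𝒴 : Type*} [Fintype 𝒴]

theorem sum_fin_succ_pi {M : Type*} [AddCommMonoid M] {t : ℕ} (F : (Fin (t + 1) → 𝒴) → M) :
    ∑ y, F y = ∑ y₀ : Fin t → 𝒴, ∑ l, F (Fin.snoc y₀ l) := by
  rw [← (Fin.snocEquiv fun _ ↦ 𝒴).sum_comp, Fintype.sum_prod_type_right]
  rfl

theorem prefixDist_snoc (π : Protocol k n 𝒴) (p : Fin (2 * k) → ℝ) {t : ℕ} (ht : t + 1 ≤ n)
    (y₀ : Fin t → 𝒴) (l : 𝒴) :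
    prefixDist π p (t + 1) ht (Fin.snoc y₀ l) =
      prefixDist π p t (by omega) y₀ * outputDist p (π ⟨t, ht⟩ y₀) l := by
  set y : Fin (t + 1) → 𝒴 := Fin.snoc y₀ l
  have h : prefixDist π p (t + 1) ht y =
      prefixDist π p t (by omega) (Fin.init y) *
        outputDist p (π ⟨t, ht⟩ (Fin.init y)) (y (Fin.last t)) := by
    rw [prefixDist, Fin.prod_univ_castSucc]
    rfl
  simp only [h, y, Fin.init_snoc, Fin.snoc_last]

theorem isDist_prefixDist (π : Protocol k n 𝒴) (hπ : ChannelProtocol π) {p : Fin (2 * k) → ℝ}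
    (hp : IsDist p) (t : ℕ) (ht : t ≤ n) : IsDist (prefixDist π p t ht) := by
  refine ⟨fun y ↦ prod_nonneg fun s _ ↦ (isDist_outputDist hp (hπ _ _)).1 _, ?_⟩
  induction t with
  | zero => simp [prefixDist]
  | succ t ih =>
    simp only [sum_fin_succ_pi, prefixDist_snoc, ← mul_sum, (isDist_outputDist hp (hπ _ _)).2,
      mul_one]
    exact ih (by omega)

theorem sqHellinger_prefixDist (π : Protocol k n 𝒴) (hπ : ChannelProtocol π)
    {p q : Fin (2 * k) → ℝ} (hp : IsDist p) (hq : IsDist q) (t : ℕ) (ht : t ≤ n) :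
    sqHellinger (prefixDist π p t ht) (prefixDist π q t ht) =
      ∑ s : Fin t, ∑ ys : Fin s.val → 𝒴,
        √(prefixDist π p s.val (le_trans s.isLt.le ht) ys) *
          √(prefixDist π q s.val (le_trans s.isLt.le ht) ys) *
          sqHellinger (outputDist p (π ⟨s.val, lt_of_lt_of_le s.isLt ht⟩ ys))
            (outputDist q (π ⟨s.val, lt_of_lt_of_le s.isLt ht⟩ ys)) := by
  induction t with
  | zero => simp [sqHellinger, prefixDist]
  | succ t ih =>
    have ht' : t ≤ n := by omega
    have step : ∀ y₀ : Fin t → 𝒴,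
        ∑ l, (√(prefixDist π p (t + 1) ht (Fin.snoc y₀ l)) -
            √(prefixDist π q (t + 1) ht (Fin.snoc y₀ l))) ^ 2 =
          (√(prefixDist π p t ht' y₀) - √(prefixDist π q t ht' y₀)) ^ 2 +
            √(prefixDist π p t ht' y₀) * √(prefixDist π q t ht' y₀) *
              sqHellinger (outputDist p (π ⟨t, ht⟩ y₀)) (outputDist q (π ⟨t, ht⟩ y₀)) := by
      intro y₀
      simp only [prefixDist_snoc]
      exact sqHellinger_const_mul ((isDist_prefixDist π hπ hp t ht').1 y₀)
        ((isDist_prefixDist π hπ hq t ht').1 y₀) (isDist_outputDist hp (hπ _ _))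
        (isDist_outputDist hq (hπ _ _))
    rw [sqHellinger, sum_fin_succ_pi, sum_congr rfl fun y₀ _ ↦ step y₀, sum_add_distrib,
      Fin.sum_univ_castSucc]
    change sqHellinger (prefixDist π p t ht') (prefixDist π q t ht') + _ = _
    rw [ih ht']
    rfl

theorem triangularDiscrimination_prefixDist_paninski_le (π : Protocol k n 𝒴)
    (hπ : ChannelProtocol π) {ε : ℝ} (hε : 0 ≤ ε) (hε' : ε ≤ 1 / 4) {z z' : Fin k → Bool}
    {i : Fin k} (hz : z i = true) (hz' : z' i = false) (hzz' : ∀ j ≠ i, z j = z' j) (t : ℕ)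
    (ht : t ≤ n) :
    triangularDiscrimination (prefixDist π (paninski k ε z) t ht)
        (prefixDist π (paninski k ε z') t ht) ≤
      8 * ε ^ 2 / k * ∑ s : Fin t, ∑ ys : Fin s.val → 𝒴,
        (prefixDist π (paninski k ε z) s.val (le_trans s.isLt.le ht) ys +
            prefixDist π (paninski k ε z') s.val (le_trans s.isLt.le ht) ys) *
          HMat k (π ⟨s.val, lt_of_lt_of_le s.isLt ht⟩ ys) i i := by
  have hP := isDist_paninski i.pos.ne' hε (by linarith)
  refine (triangularDiscrimination_le_two_mul_sqHellinger
    (isDist_prefixDist π hπ (hP z) t ht).1 (isDist_prefixDist π hπ (hP z') t ht).1).trans ?_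
  rw [sqHellinger_prefixDist π hπ (hP z) (hP z'), mul_sum, mul_sum]
  refine sum_le_sum fun s _ ↦ ?_
  rw [mul_sum, mul_sum]
  refine sum_le_sum fun ys _ ↦ ?_
  have hA := (isDist_prefixDist π hπ (hP z) s.val (le_trans s.isLt.le ht)).1 ys
  have hB := (isDist_prefixDist π hπ (hP z') s.val (le_trans s.isLt.le ht)).1 ys
  calc
    _ ≤ 2 * ((prefixDist π (paninski k ε z) s.val (le_trans s.isLt.le ht) ys +
          prefixDist π (paninski k ε z') s.val (le_trans s.isLt.le ht) ys) / 2 *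
        (8 * ε ^ 2 / k * HMat k (π ⟨s.val, lt_of_lt_of_le s.isLt ht⟩ ys) i i)) := by
      gcongr 2 * ?_
      exact mul_le_mul (sqrt_mul_sqrt_le_add_div_two hA hB)
        (sqHellinger_outputDist_paninski_le hε hε' hz hz' hzz' fun x y ↦ (hπ _ _ x).1 y)
        (sqHellinger_nonneg _ _) (by positivity)
    _ = _ := by ring

end Protocol

theorem per_coordinate_information_bound_general
    (k n : ℕ) (ε : ℝ) (hε : 0 < ε) (hε' : ε ≤ 1 / 4)
    (𝒴 : Type) [Fintype 𝒴]
    (π : Protocol k n 𝒴) (hch : ChannelProtocol π)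
    (t : ℕ) (ht : t ≤ n) (i : Fin k) :
    miNats (coordJoint
        (fun z y => (1 / 2 ^ k : ℝ) * prefixDist π (paninski k ε z) t ht y) i)
      ≤ (8 * ε ^ 2 / (k : ℝ)) * ∑ s : Fin t, ∑ ys : Fin s.val → 𝒴,
          ((1 / 2 ^ k : ℝ) * ∑ z : Fin k → Bool,
              prefixDist π (paninski k ε z) s.val (le_trans s.isLt.le ht) ys) *
            HMat k (π ⟨s.val, lt_of_lt_of_le s.isLt ht⟩ ys) i i := by
  set φ := (Equiv.funSplitAt i Bool).symm
  have hP z := isDist_prefixDist π hch (isDist_paninski i.pos.ne' hε.le (by linarith) z) t ht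
  have hmix : ∑ s : Fin t, ∑ ys : Fin s.val → 𝒴,
        (∑ z, prefixDist π (paninski k ε z) s.val (le_trans s.isLt.le ht) ys) *
          HMat k (π ⟨s.val, lt_of_lt_of_le s.isLt ht⟩ ys) i i =
      ∑ w, ∑ s : Fin t, ∑ ys : Fin s.val → 𝒴,
        (prefixDist π (paninski k ε (φ (true, w))) s.val (le_trans s.isLt.le ht) ys +
            prefixDist π (paninski k ε (φ (false, w))) s.val (le_trans s.isLt.le ht) ys) *
          HMat k (π ⟨s.val, lt_of_lt_of_le s.isLt ht⟩ ys) i i := by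
    rw [sum_comm]
    refine sum_congr rfl fun s _ ↦ ?_
    rw [sum_comm]
    exact sum_congr rfl fun ys _ ↦ by rw [← sum_mul, ← sum_funSplitAt_symm i]
  calc _ ≤ 1 / 2 ^ k * ∑ w, triangularDiscrimination
        (prefixDist π (paninski k ε (φ (true, w))) t ht)
        (prefixDist π (paninski k ε (φ (false, w))) t ht) := miNats_coordJoint_le _ hP i
    _ ≤ 1 / 2 ^ k * ∑ w, 8 * ε ^ 2 / k * ∑ s : Fin t, ∑ ys : Fin s.val → 𝒴,
          (prefixDist π (paninski k ε (φ (true, w))) s.val (le_trans s.isLt.le ht) ys +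
              prefixDist π (paninski k ε (φ (false, w))) s.val (le_trans s.isLt.le ht) ys) *
            HMat k (π ⟨s.val, lt_of_lt_of_le s.isLt ht⟩ ys) i i := by
      gcongr with w
      exact triangularDiscrimination_prefixDist_paninski_le π hch hε.le hε'
        (funSplitAt_symm_apply_self i true w) (funSplitAt_symm_apply_self i false w)
        (fun j hj ↦ funSplitAt_symm_apply_of_ne i true false w hj) t ht
    _ = _ := by
      simp only [mul_assoc, ← mul_sum, hmix]
      ring

/-- Per-coordinate information bound: for a deterministic
sequentially interactive protocol, with `Z` uniform on `{−1,+1}^k` and inputs i.i.d.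
`p_Z` given `Z`, for every `1 ≤ t ≤ n` and every coordinate `i`,
`I(Z_i; Y^t) ≤ (8ε²/k) Σ_{s=1}^{t} E[H(W^{Y^{s−1}})_{i,i}]` (information in nats),
the expectation being over the transcript prefix `Y^{s−1}` under the mixture. -/
theorem per_coordinate_information_bound
    (k n : ℕ) (hk : 1 ≤ k) (ε : ℝ) (hε : 0 < ε) (hε' : ε ≤ 1 / 4)
    (𝒴 : Type) [Fintype 𝒴]
    (π : Protocol k n 𝒴) (hch : ChannelProtocol π)
    (t : ℕ) (ht1 : 1 ≤ t) (ht : t ≤ n) (i : Fin k) :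
    miNats (coordJoint
        (fun z y => (1 / 2 ^ k : ℝ) * prefixDist π (paninski k ε z) t ht y) i)
      ≤ (8 * ε ^ 2 / (k : ℝ)) * ∑ s : Fin t, ∑ ys : Fin s.val → 𝒴,
          ((1 / 2 ^ k : ℝ) * ∑ z : Fin k → Bool,
              prefixDist π (paninski k ε z) s.val (le_trans s.isLt.le ht) ys) *
            HMat k (π ⟨s.val, lt_of_lt_of_le s.isLt ht⟩ ys) i i :=
  per_coordinate_information_bound_general k n ε hε hε' 𝒴 π hch t ht i

end Paper
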